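/- Assume κ⁺ Eₙ^{a⁺}(x) ≤ m n + κ⁻ Eₙ^{a⁻}(x) for every n ≥ 1 and x ∈ (ℝ^d)ⁿ. Then for every correlation-function sequence k with ‖k‖ < ∞, the sequence Sk satisfies ‖Sk‖ ≤ (C κ⁻/m + κ⁺/m + 1/C) ‖k‖. (The contraction estimate ‖S‖ ≤ Cκ⁻/m + κ⁺/m + 1/C at the heart of the proof of Theorem 6.1.) -/

import Mathlib

open MeasureTheory ENNReal

/-- The pair interaction energy `Eₙ^a(x) = Σ_{i≠j} a(xᵢ - xⱼ)` (equal to `0` for `n ≤ 1`). -/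
def pairEnergy (d : ℕ) (a : (Fin d → ℝ) → ℝ) (n : ℕ) (x : Fin n → (Fin d → ℝ)) : ℝ :=
  ∑ i : Fin n, ∑ j : Fin n, if i ≠ j then a (x i - x j) else 0

/-- The norm `‖k‖ = sup_n C⁻ⁿ ess sup_x |k⁽ⁿ⁾(x)|` of the space `𝒦_C`. -/
noncomputable def normKC (d : ℕ) (C : ℝ) (k : (n : ℕ) → (Fin n → (Fin d → ℝ)) → ℝ) : ℝ≥0∞ :=
  ⨆ n : ℕ, (ENNReal.ofReal (C ^ n))⁻¹ *
    essSup (fun x : Fin n → (Fin d → ℝ) => ENNReal.ofReal |k n x|) volume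

/-- The operator `S` from the proof of Theorem 6.1: `(Sk)⁽⁰⁾ = 0` and for `n ≥ 1`,
`(Sk)⁽ⁿ⁾(x) = (mn + κ⁻Eₙ^{a⁻}(x))⁻¹ [ -κ⁻ Σ_j ∫ a⁻(y-xⱼ)k⁽ⁿ⁺¹⁾(x,y)dy
  + κ⁺ Σ_i (Σ_{j≠i} a⁺(xᵢ-xⱼ)) k⁽ⁿ⁻¹⁾(x̂ᵢ) + κ⁺ Σ_j ∫ a⁺(y-xⱼ)k⁽ⁿ⁾(…,y,…)dy ]`. -/
noncomputable def Sop (d : ℕ) (m κm κp : ℝ) (aminus aplus : (Fin d → ℝ) → ℝ)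
    (k : (n : ℕ) → (Fin n → (Fin d → ℝ)) → ℝ) :
    (n : ℕ) → (Fin n → (Fin d → ℝ)) → ℝ
  | 0 => fun _ => 0
  | (n + 1) => fun x =>
      (m * (n + 1) + κm * pairEnergy d aminus (n + 1) x)⁻¹ *
        (-(κm * ∑ j : Fin (n + 1),
              ∫ y : Fin d → ℝ, aminus (y - x j) * k (n + 2) (Fin.snoc x y))
          + κp * ∑ i : Fin (n + 1),
              (∑ j : Fin (n + 1), if j ≠ i then aplus (x i - x j) else 0) *
                k n (x ∘ i.succAbove)
          + κp * ∑ j : Fin (n + 1),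
              ∫ y : Fin d → ℝ, aplus (y - x j) * k (n + 1) (Function.update x j y))

/-!
Write `(Sk)⁽ⁿ⁾ = D⁻¹(-κ⁻T₁ + κ⁺T₂ + κ⁺T₃)` with `D = mn + κ⁻Eₙ^{a⁻} ≥ mn`. Since `a^±` are
probability densities, each of the `n` integrals in `T₁` (resp. `T₃`) is at most the essential
bound `Cⁿ⁺¹‖k‖` (resp. `Cⁿ‖k‖`) of `k`, which contributes `Cκ⁻/m` (resp. `κ⁺/m`). The weights in
`T₂` sum to `Eₙ^{a⁺}`, so `κ⁺|T₂| ≤ κ⁺Eₙ^{a⁺}Cⁿ⁻¹‖k‖ ≤ D Cⁿ⁻¹‖k‖` by the domination hypothesis,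
contributing `1/C`. Essential bounds on `k⁽ⁿ⁺¹⁾` hold for a.e. `x` and a.e. inserted coordinate
`y` by Fubini.
-/

section TupleAE

variable {α : Type*} [MeasureSpace α] [SigmaFinite (volume : Measure α)] {n : ℕ}

lemma quasiMeasurePreserving_removeNth (i : Fin (n + 1)) :
    Measure.QuasiMeasurePreserving (i.removeNth : (Fin (n + 1) → α) → Fin n → α) :=
  Measure.quasiMeasurePreserving_snd.comp
    (volume_preserving_piFinSuccAbove (fun _ => α) i).quasiMeasurePreserving

lemma ae_ae_insertNth (i : Fin (n + 1)) {P : (Fin (n + 1) → α) → Prop} (h : ∀ᵐ z, P z) :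
    ∀ᵐ x : Fin n → α, ∀ᵐ y : α, P (i.insertNth y x) := by
  have h_prod : ∀ᵐ p : α × (Fin n → α), P (i.insertNth p.1 p.2) :=
    (volume_preserving_piFinSuccAbove (fun _ => α) i).symm.quasiMeasurePreserving.ae h
  rw [Measure.volume_eq_prod] at h_prod
  exact Measure.ae_ae_of_ae_prod (Measure.measurePreserving_swap.quasiMeasurePreserving.ae h_prod)

lemma ae_ae_snoc {P : (Fin (n + 1) → α) → Prop} (h : ∀ᵐ z, P z) :
    ∀ᵐ x : Fin n → α, ∀ᵐ y : α, P (Fin.snoc x y) := by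
  simpa only [Fin.insertNth_last'] using ae_ae_insertNth (Fin.last n) h

lemma ae_ae_update (i : Fin (n + 1)) {P : (Fin (n + 1) → α) → Prop} (h : ∀ᵐ z, P z) :
    ∀ᵐ x : Fin (n + 1) → α, ∀ᵐ y : α, P (Function.update x i y) := by
  filter_upwards [(quasiMeasurePreserving_removeNth i).ae (ae_ae_insertNth i h)] with x hx
  simpa only [Fin.insertNth_removeNth] using hx

end TupleAE

lemma abs_integral_mul_sub_le {G : Type*} [MeasurableSpace G] [AddGroup G] [MeasurableAdd G]
    {μ : Measure G} [μ.IsAddRightInvariant] {a f : G → ℝ} {B : ℝ} (ha : ∀ y, 0 ≤ a y)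
    (ha_int : Integrable a μ) (ha_norm : ∫ y, a y ∂μ = 1) (x : G) (hf : ∀ᵐ y ∂μ, |f y| ≤ B) :
    |∫ y, a (y - x) * f y ∂μ| ≤ B :=
  calc |∫ y, a (y - x) * f y ∂μ|
      ≤ ∫ y, |a (y - x) * f y| ∂μ := abs_integral_le_integral_abs
    _ ≤ ∫ y, a (y - x) * B ∂μ := by
        refine integral_mono_of_nonneg (ae_of_all _ fun _ => abs_nonneg _)
          ((ha_int.comp_sub_right x).mul_const B) ?_
        filter_upwards [hf] with y hy
        rw [abs_mul, abs_of_nonneg (ha _)]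
        exact mul_le_mul_of_nonneg_left hy (ha _)
    _ = B := by rw [integral_mul_const, integral_sub_right_eq_self, ha_norm, one_mul]

lemma abs_sum_le_card_mul {ι : Type*} {s : Finset ι} {f : ι → ℝ} {B : ℝ}
    (hf : ∀ i ∈ s, |f i| ≤ B) : |∑ i ∈ s, f i| ≤ s.card * B :=
  (Finset.abs_sum_le_sum_abs f s).trans <| by
    simpa only [nsmul_eq_mul] using Finset.sum_le_card_nsmul s _ B hf

lemma abs_sum_mul_le_sum_mul {ι : Type*} {s : Finset ι} {w f : ι → ℝ} {B : ℝ}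
    (hw : ∀ i ∈ s, 0 ≤ w i) (hf : ∀ i ∈ s, |f i| ≤ B) :
    |∑ i ∈ s, w i * f i| ≤ (∑ i ∈ s, w i) * B :=
  (Finset.abs_sum_le_sum_abs _ s).trans <| by
    rw [Finset.sum_mul]
    refine Finset.sum_le_sum fun i hi => ?_
    rw [abs_mul, abs_of_nonneg (hw i hi)]
    exact mul_le_mul_of_nonneg_left (hf i hi) (hw i hi)

lemma abs_inv_mul_le_of_bounds {m κm κp C N D B T₁ T₂ T₃ : ℝ} (hm : 0 < m) (hN : 0 < N)
    (hC : 0 < C) (hκm : 0 ≤ κm) (hκp : 0 ≤ κp) (hD : m * N ≤ D)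
    (h₁ : |T₁| ≤ N * (C ^ 2 * B)) (h₂ : κp * |T₂| ≤ D * B) (h₃ : |T₃| ≤ N * (C * B)) :
    |D⁻¹ * (-(κm * T₁) + κp * T₂ + κp * T₃)| ≤ (C * κm / m + κp / m + 1 / C) * (C * B) := by
  have hD₀ : 0 < D := (mul_pos hm hN).trans_le hD
  have hB : 0 ≤ B := (mul_nonneg_iff_of_pos_left (mul_pos hN hC)).1 <| by
    rw [mul_assoc]; exact (abs_nonneg T₃).trans h₃
  set X := κm * C ^ 2 * B + κp * C * B
  have hsum : |-(κm * T₁) + κp * T₂ + κp * T₃| ≤ N * X + D * B := by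
    have := abs_add_three (-(κm * T₁)) (κp * T₂) (κp * T₃)
    rw [abs_neg, abs_mul, abs_mul, abs_mul, abs_of_nonneg hκm, abs_of_nonneg hκp] at this
    nlinarith [mul_le_mul_of_nonneg_left h₁ hκm, mul_le_mul_of_nonneg_left h₃ hκp]
  rw [abs_mul, abs_inv, abs_of_pos hD₀]
  calc D⁻¹ * |-(κm * T₁) + κp * T₂ + κp * T₃|
      ≤ D⁻¹ * (N * X + D * B) := mul_le_mul_of_nonneg_left hsum (by positivity)
    _ = N * X / D + B := by field_simp
    _ ≤ N * X / (m * N) + B := by gcongr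
    _ = (C * κm / m + κp / m + 1 / C) * (C * B) := by field_simp; ring

section Contraction

variable {d : ℕ} {C : ℝ} {k : (n : ℕ) → (Fin n → (Fin d → ℝ)) → ℝ}
  {aminus aplus : (Fin d → ℝ) → ℝ} {m κm κp : ℝ}

lemma pairEnergy_nonneg {a : (Fin d → ℝ) → ℝ} (ha : ∀ y, 0 ≤ a y) (n : ℕ)
    (x : Fin n → (Fin d → ℝ)) : 0 ≤ pairEnergy d a n x :=
  Finset.sum_nonneg fun _ _ => Finset.sum_nonneg fun _ _ => by split_ifs <;> simp [ha]

lemma normKC_le_ofReal_iff (hC : 0 < C) {K : ℝ} (hK : 0 ≤ K) :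
    normKC d C k ≤ ENNReal.ofReal K ↔ ∀ n, ∀ᵐ x, |k n x| ≤ C ^ n * K := by
  have hCn : ∀ n, ENNReal.ofReal (C ^ n) ≠ 0 := fun n => (ENNReal.ofReal_pos.2 (pow_pos hC n)).ne'
  simp only [normKC, iSup_le_iff, ENNReal.inv_mul_le_iff (hCn _) ENNReal.ofReal_ne_top,
    ← ENNReal.ofReal_mul (pow_nonneg hC.le _)]
  refine forall_congr' fun n => ⟨fun h => ?_, fun h => essSup_le_of_ae_le _ ?_⟩
  · filter_upwards [ENNReal.ae_le_essSup fun x => ENNReal.ofReal |k n x|] with x hx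
    exact (ENNReal.ofReal_le_ofReal_iff (by positivity)).1 (hx.trans h)
  · filter_upwards [h] with x hx
    exact ENNReal.ofReal_le_ofReal hx

lemma abs_Sop_succ_le (ham_nonneg : ∀ y, 0 ≤ aminus y) (ham_int : Integrable aminus)
    (ham_norm : ∫ y, aminus y = 1) (hap_nonneg : ∀ y, 0 ≤ aplus y) (hap_int : Integrable aplus)
    (hap_norm : ∫ y, aplus y = 1) (hm : 0 < m) (hκm : 0 ≤ κm) (hκp : 0 ≤ κp) (hC : 0 < C)
    {n : ℕ} {x : Fin (n + 1) → (Fin d → ℝ)}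
    (hdom : κp * pairEnergy d aplus (n + 1) x ≤ m * (n + 1) + κm * pairEnergy d aminus (n + 1) x)
    {K : ℝ} (h₂ : ∀ᵐ y, |k (n + 2) (Fin.snoc x y)| ≤ C ^ (n + 2) * K)
    (h₁ : ∀ j, ∀ᵐ y, |k (n + 1) (Function.update x j y)| ≤ C ^ (n + 1) * K)
    (h₀ : ∀ i : Fin (n + 1), |k n (x ∘ i.succAbove)| ≤ C ^ n * K) :
    |Sop d m κm κp aminus aplus k (n + 1) x|
      ≤ (C * κm / m + κp / m + 1 / C) * (C ^ (n + 1) * K) := by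
  rw [show C ^ (n + 1) * K = C * (C ^ n * K) by ring]
  refine abs_inv_mul_le_of_bounds (N := n + 1) hm (by positivity) hC hκm hκp
    (le_add_of_nonneg_right (mul_nonneg hκm (pairEnergy_nonneg ham_nonneg _ x))) ?_ ?_ ?_
  · refine (abs_sum_le_card_mul fun j _ =>
      abs_integral_mul_sub_le ham_nonneg ham_int ham_norm (x j) h₂).trans_eq ?_
    simp only [Finset.card_univ, Fintype.card_fin]
    push_cast
    ring
  · have hrow : ∀ i, 0 ≤ ∑ j, if j ≠ i then aplus (x i - x j) else 0 := fun i =>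
      Finset.sum_nonneg fun _ _ => by split_ifs <;> simp [hap_nonneg]
    have hE : ∑ i, ∑ j, (if j ≠ i then aplus (x i - x j) else 0) = pairEnergy d aplus (n + 1) x :=
      Finset.sum_congr rfl fun i _ => Finset.sum_congr rfl fun j _ => if_congr ne_comm rfl rfl
    calc κp * |∑ i, (∑ j, if j ≠ i then aplus (x i - x j) else 0) * k n (x ∘ i.succAbove)|
        ≤ κp * (pairEnergy d aplus (n + 1) x * (C ^ n * K)) := by
          rw [← hE]
          exact mul_le_mul_of_nonneg_left
            (abs_sum_mul_le_sum_mul (fun i _ => hrow i) fun i _ => h₀ i) hκp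
      _ ≤ _ := by
          rw [← mul_assoc]
          exact mul_le_mul_of_nonneg_right hdom ((abs_nonneg _).trans (h₀ 0))
  · refine (abs_sum_le_card_mul fun j _ =>
      abs_integral_mul_sub_le hap_nonneg hap_int hap_norm (x j) (h₁ j)).trans_eq ?_
    simp only [Finset.card_univ, Fintype.card_fin]
    push_cast
    ring

lemma ae_abs_Sop_le (ham_nonneg : ∀ y, 0 ≤ aminus y) (ham_int : Integrable aminus)
    (ham_norm : ∫ y, aminus y = 1) (hap_nonneg : ∀ y, 0 ≤ aplus y) (hap_int : Integrable aplus)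
    (hap_norm : ∫ y, aplus y = 1) (hm : 0 < m) (hκm : 0 ≤ κm) (hκp : 0 ≤ κp) (hC : 0 < C)
    (hdom : ∀ (n : ℕ) (x : Fin (n + 1) → (Fin d → ℝ)),
      κp * pairEnergy d aplus (n + 1) x ≤ m * (n + 1) + κm * pairEnergy d aminus (n + 1) x)
    {K : ℝ} (hK : 0 ≤ K) (hk : ∀ n, ∀ᵐ x, |k n x| ≤ C ^ n * K) (n : ℕ) :
    ∀ᵐ x, |Sop d m κm κp aminus aplus k n x| ≤ C ^ n * ((C * κm / m + κp / m + 1 / C) * K) := by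
  cases n with
  | zero => exact ae_of_all _ fun _ => by simp only [Sop, abs_zero]; positivity
  | succ n =>
    filter_upwards [ae_ae_snoc (hk (n + 2)),
      ae_all_iff.2 fun j => ae_ae_update j (hk (n + 1)),
      ae_all_iff.2 fun i => (quasiMeasurePreserving_removeNth i).ae (hk n)] with x h₂ h₁ h₀
    rw [mul_left_comm]
    exact abs_Sop_succ_le ham_nonneg ham_int ham_norm hap_nonneg hap_int hap_norm hm hκm hκp hC
      (hdom n x) h₂ h₁ h₀

end Contraction

theorem stmt11_general (d : ℕ)
    (aminus aplus : (Fin d → ℝ) → ℝ)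
    (ham_nonneg : ∀ x, 0 ≤ aminus x)
    (ham_int : Integrable aminus)
    (ham_norm : ∫ x, aminus x = 1)
    (hap_nonneg : ∀ x, 0 ≤ aplus x)
    (hap_int : Integrable aplus)
    (hap_norm : ∫ x, aplus x = 1)
    (m κm κp C : ℝ) (hm : 0 < m) (hκm : 0 < κm) (hκp : 0 < κp) (hC : 0 < C)
    (hdom : ∀ (n : ℕ) (x : Fin (n + 1) → (Fin d → ℝ)),
      κp * pairEnergy d aplus (n + 1) x
        ≤ m * (n + 1) + κm * pairEnergy d aminus (n + 1) x)
    (k : (n : ℕ) → (Fin n → (Fin d → ℝ)) → ℝ) :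
    normKC d C (Sop d m κm κp aminus aplus k)
      ≤ ENNReal.ofReal (C * κm / m + κp / m + 1 / C) * normKC d C k := by
  set Q := C * κm / m + κp / m + 1 / C
  have hQ : 0 < Q := by positivity
  by_cases htop : normKC d C k = ⊤
  · rw [htop, ENNReal.mul_top (ENNReal.ofReal_pos.2 hQ).ne']
    exact le_top
  set K := (normKC d C k).toReal
  have hK : 0 ≤ K := ENNReal.toReal_nonneg
  have hk : ∀ n, ∀ᵐ x, |k n x| ≤ C ^ n * K :=
    (normKC_le_ofReal_iff hC hK).1 (ENNReal.ofReal_toReal htop).ge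
  calc normKC d C (Sop d m κm κp aminus aplus k) ≤ ENNReal.ofReal (Q * K) :=
        (normKC_le_ofReal_iff hC (by positivity)).2 <| ae_abs_Sop_le ham_nonneg ham_int ham_norm
          hap_nonneg hap_int hap_norm hm hκm.le hκp.le hC hdom hK hk
    _ = ENNReal.ofReal Q * normKC d C k := by
        rw [ENNReal.ofReal_mul hQ.le, ENNReal.ofReal_toReal htop]

/-- The contraction estimate `‖Sk‖ ≤ (Cκ⁻/m + κ⁺/m + 1/C)‖k‖` at the heart of the proof
of Theorem 6.1, valid under `κ⁺Eₙ^{a⁺} ≤ mn + κ⁻Eₙ^{a⁻}`. -/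
theorem stmt11 (d : ℕ) (hd : 1 ≤ d)
    (aminus aplus : (Fin d → ℝ) → ℝ)
    (ham_nonneg : ∀ x, 0 ≤ aminus x) (ham_even : ∀ x, aminus (-x) = aminus x)
    (ham_meas : Measurable aminus) (ham_int : Integrable aminus)
    (ham_norm : ∫ x, aminus x = 1)
    (hap_nonneg : ∀ x, 0 ≤ aplus x) (hap_even : ∀ x, aplus (-x) = aplus x)
    (hap_meas : Measurable aplus) (hap_int : Integrable aplus)
    (hap_norm : ∫ x, aplus x = 1)
    (m κm κp C : ℝ) (hm : 0 < m) (hκm : 0 < κm) (hκp : 0 < κp) (hC : 0 < C)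
    (hdom : ∀ (n : ℕ) (x : Fin (n + 1) → (Fin d → ℝ)),
      κp * pairEnergy d aplus (n + 1) x
        ≤ m * (n + 1) + κm * pairEnergy d aminus (n + 1) x)
    (k : (n : ℕ) → (Fin n → (Fin d → ℝ)) → ℝ) (hkmeas : ∀ n, Measurable (k n))
    (hksymm : ∀ (n : ℕ) (σ : Equiv.Perm (Fin n)) (x : Fin n → (Fin d → ℝ)),
      k n (x ∘ σ) = k n x)
    (hknorm : normKC d C k < ⊤) :
    normKC d C (Sop d m κm κp aminus aplus k)
      ≤ ENNReal.ofReal (C * κm / m + κp / m + 1 / C) * normKC d C k :=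
  stmt11_general d aminus aplus ham_nonneg ham_int ham_norm hap_nonneg hap_int hap_norm m κm κp C hm
    hκm hκp hC hdom k
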